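/- The group G = ⟨a, b ∣ a²b⁻¹aba⁻²b⁻¹⟩ is nonabelian. -/
import Mathlib


/-- The relator `a² b⁻¹ a b a⁻² b⁻¹` in the free group on two generators. -/
def rel4103 : FreeGroup (Fin 2) :=
  (FreeGroup.of 0) ^ 2 * (FreeGroup.of 1)⁻¹ * FreeGroup.of 0 * FreeGroup.of 1 *
    (FreeGroup.of 0)⁻¹ ^ 2 * (FreeGroup.of 1)⁻¹

def pA : Equiv.Perm (Fin 5) :=
  ⟨![0, 1, 3, 4, 2], ![0, 1, 4, 2, 3], by decide, by decide⟩

def pB : Equiv.Perm (Fin 5) :=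
  ⟨![0, 2, 4, 3, 1], ![0, 4, 1, 3, 2], by decide, by decide⟩

def f : Fin 2 → Equiv.Perm (Fin 5) := ![pA, pB]

lemma hrel : ∀ r ∈ ({rel4103} : Set (FreeGroup (Fin 2))), FreeGroup.lift f r = 1 := by
  intro r hr
  rw [Set.mem_singleton_iff] at hr
  subst hr
  rw [rel4103]
  simp only [map_mul, map_inv, map_pow, FreeGroup.lift_apply_of]
  decide

/-- The group `G = ⟨a, b ∣ a²b⁻¹aba⁻²b⁻¹⟩` is nonabelian. -/
theorem stmt7 :
    ∃ x y : PresentedGroup ({rel4103} : Set (FreeGroup (Fin 2))),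
      x * y ≠ y * x := by
  refine ⟨PresentedGroup.of 0, PresentedGroup.of 1, fun h => ?_⟩
  have := congrArg (PresentedGroup.toGroup hrel) h
  simp only [map_mul, PresentedGroup.toGroup.of] at this
  exact absurd this (by decide)
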